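/- For every real number P, every τ ≥ 0, and natural numbers q ≤ r, |∫_0^τ ξ^q e^{iξP} dξ − Σ_{ℓ=0}^{r−q} (iP)^ℓ τ^{ℓ+q+1}/(ℓ! (ℓ+q+1))| ≤ |P|^{r+1−q} τ^{r+2} / ((r+1−q)! (r+2)). -/

import Mathlib

/-!
Write `R_n(z) = e^z - ∑_{ℓ<n} z^ℓ/ℓ!` with `n = r - q + 1`. Integrating the Taylor polynomial termwise
turns the quantity to be bounded into `∫_0^τ ξ^q R_n(iξP) dξ`. Since `R_{n+1}' = R_n`,
`R_{n+1}(0) = 0` and `|R_0(ix)| = |e^{ix}| = 1`, comparing derivatives along `[0, x]` gives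
`|R_n(ix)| ≤ |x|^n/n!` by induction on `n`, and integrating `ξ^q |ξP|^n/n!` gives the bound.
-/

open Complex
open Finset
open scoped Nat ComplexConjugate

noncomputable def expTaylorRemainder (n : ℕ) (z : ℂ) : ℂ :=
  exp z - ∑ ℓ ∈ range n, z ^ ℓ / ℓ !

lemma hasDerivAt_sum_range_pow_div_factorial (n : ℕ) (z : ℂ) :
    HasDerivAt (fun w : ℂ => ∑ ℓ ∈ range (n + 1), w ^ ℓ / ℓ !) (∑ ℓ ∈ range n, z ^ ℓ / ℓ !) z := by
  induction n with
  | zero => simpa using hasDerivAt_const z (1 : ℂ)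
  | succ n ih =>
    simp_rw [sum_range_succ _ (n + 1)]
    refine (ih.add ((hasDerivAt_pow (n + 1) z).div_const ((n + 1)! : ℂ))).congr_deriv ?_
    rw [sum_range_succ _ n, Nat.factorial_succ]
    push_cast
    field_simp

lemma hasDerivAt_expTaylorRemainder_succ (n : ℕ) (z : ℂ) :
    HasDerivAt (expTaylorRemainder (n + 1)) (expTaylorRemainder n z) z :=
  (hasDerivAt_exp z).sub (hasDerivAt_sum_range_pow_div_factorial n z)

lemma expTaylorRemainder_succ_zero (n : ℕ) : expTaylorRemainder (n + 1) 0 = 0 := by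
  simp [expTaylorRemainder, sum_range_succ']

lemma expTaylorRemainder_conj (n : ℕ) (z : ℂ) :
    expTaylorRemainder n (conj z) = conj (expTaylorRemainder n z) := by
  simp [expTaylorRemainder, ← exp_conj]

lemma norm_expTaylorRemainder_I_mul_le_of_nonneg (n : ℕ) {x : ℝ} (hx : 0 ≤ x) :
    ‖expTaylorRemainder n (I * x)‖ ≤ x ^ n / n ! := by
  induction n generalizing x with
  | zero => simp [expTaylorRemainder, norm_exp_I_mul_ofReal]
  | succ n ih =>
    have hderiv (t : ℝ) : HasDerivAt (fun t : ℝ => expTaylorRemainder (n + 1) (I * t))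
        (expTaylorRemainder n (I * t) * I) t :=
      ((hasDerivAt_expTaylorRemainder_succ n (I * t)).comp (t : ℂ)
        ((hasDerivAt_id (t : ℂ)).const_mul I)).comp_ofReal.congr_deriv (by simp)
    have hbound (t : ℝ) : HasDerivAt (fun t : ℝ => t ^ (n + 1) / (n + 1)!) (t ^ n / n !) t := by
      refine ((hasDerivAt_pow (n + 1) t).div_const ((n + 1)! : ℝ)).congr_deriv ?_
      rw [Nat.factorial_succ]
      push_cast
      field_simp
    refine image_norm_le_of_norm_deriv_right_le_deriv_boundary
      (fun t _ => (hderiv t).continuousAt.continuousWithinAt)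
      (fun t _ => (hderiv t).hasDerivWithinAt) (by simp [expTaylorRemainder_succ_zero]) hbound
      (fun t ht => ?_) ⟨hx, le_rfl⟩
    rw [norm_mul, norm_I, mul_one]
    exact ih ht.1

lemma norm_expTaylorRemainder_I_mul_le (n : ℕ) (x : ℝ) :
    ‖expTaylorRemainder n (I * x)‖ ≤ |x| ^ n / n ! := by
  rcases le_total 0 x with hx | hx
  · simpa [abs_of_nonneg hx] using norm_expTaylorRemainder_I_mul_le_of_nonneg n hx
  · have hI : I * x = conj (I * (-x : ℝ)) := by simp
    rw [hI, expTaylorRemainder_conj, norm_conj, abs_of_nonpos hx]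
    exact norm_expTaylorRemainder_I_mul_le_of_nonneg n (neg_nonneg.2 hx)

lemma integral_ofReal_pow (n : ℕ) (x : ℝ) :
    ∫ t in (0 : ℝ)..x, (t : ℂ) ^ n = (x : ℂ) ^ (n + 1) / (n + 1) := by
  simp_rw [← ofReal_pow, intervalIntegral.integral_ofReal, integral_pow]
  simp

lemma integral_pow_mul_exp_sub_sum (c : ℂ) (τ : ℝ) (q n : ℕ) :
    (∫ ξ in (0 : ℝ)..τ, (ξ : ℂ) ^ q * exp (c * ξ)) -
        ∑ ℓ ∈ range n, c ^ ℓ * (τ : ℂ) ^ (ℓ + q + 1) / ((ℓ ! : ℂ) * ((ℓ : ℂ) + (q : ℂ) + 1)) =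
      ∫ ξ in (0 : ℝ)..τ, (ξ : ℂ) ^ q * expTaylorRemainder n (c * ξ) := by
  have hterm (ℓ : ℕ) : ∫ ξ in (0 : ℝ)..τ, (ξ : ℂ) ^ q * ((c * ξ) ^ ℓ / ℓ !) =
      c ^ ℓ * (τ : ℂ) ^ (ℓ + q + 1) / ((ℓ ! : ℂ) * ((ℓ : ℂ) + (q : ℂ) + 1)) := by
    have h (ξ : ℝ) : (ξ : ℂ) ^ q * ((c * ξ) ^ ℓ / ℓ !) = c ^ ℓ / ℓ ! * (ξ : ℂ) ^ (ℓ + q) := by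
      ring
    simp_rw [h, intervalIntegral.integral_const_mul, integral_ofReal_pow]
    push_cast
    field_simp
  simp_rw [expTaylorRemainder, mul_sub, mul_sum]
  rw [intervalIntegral.integral_sub (Continuous.intervalIntegrable (by fun_prop) _ _)
      (Continuous.intervalIntegrable (by fun_prop) _ _),
    intervalIntegral.integral_finsetSum fun ℓ _ => Continuous.intervalIntegrable (by fun_prop) _ _]
  simp_rw [hterm]

lemma norm_integral_pow_mul_expTaylorRemainder_le (P : ℝ) {τ : ℝ} (hτ : 0 ≤ τ) (q n : ℕ) :
    ‖∫ ξ in (0 : ℝ)..τ, (ξ : ℂ) ^ q * expTaylorRemainder n (I * P * ξ)‖ ≤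
      |P| ^ n * τ ^ (q + n + 1) / (n ! * (q + n + 1)) := by
  have hpointwise (ξ : ℝ) (hξ : 0 ≤ ξ) :
      ‖(ξ : ℂ) ^ q * expTaylorRemainder n (I * P * ξ)‖ ≤ |P| ^ n / n ! * ξ ^ (q + n) := by
    have hI : I * P * ξ = I * (P * ξ : ℝ) := by push_cast; ring
    calc ‖(ξ : ℂ) ^ q * expTaylorRemainder n (I * P * ξ)‖
        ≤ ξ ^ q * (|P * ξ| ^ n / n !) := by
          rw [norm_mul, norm_pow, norm_real, Real.norm_of_nonneg hξ, hI]
          gcongr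
          exact norm_expTaylorRemainder_I_mul_le n _
      _ = |P| ^ n / n ! * ξ ^ (q + n) := by
          rw [abs_mul, abs_of_nonneg hξ]; ring
  calc _ ≤ ∫ ξ in (0 : ℝ)..τ, |P| ^ n / n ! * ξ ^ (q + n) :=
        intervalIntegral.norm_integral_le_of_norm_le hτ
          (Filter.Eventually.of_forall fun ξ hξ => hpointwise ξ hξ.1.le)
          (Continuous.intervalIntegrable (by fun_prop) _ _)
    _ = _ := by
      rw [intervalIntegral.integral_const_mul, integral_pow]
      push_cast
      field_simp
      ring

/-- Taylor-expansion error bound for `∫_0^τ ξ^q e^{iξP} dξ` (Lemma `Taylor_bound`,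
full Taylor expansion case). -/
theorem taylor_bound_general (P τ : ℝ) (hτ : 0 ≤ τ) (q r : ℕ) (hqr : q ≤ r) :
    ‖(∫ ξ in (0:ℝ)..τ, (ξ:ℂ)^q * Complex.exp (Complex.I * (ξ:ℂ) * (P:ℂ))) -
        ∑ ℓ ∈ Finset.range (r - q + 1),
          (Complex.I * (P:ℂ))^ℓ * (τ:ℂ)^(ℓ+q+1) / ((ℓ.factorial : ℂ) * ((ℓ:ℂ)+(q:ℂ)+1))‖
      ≤ |P|^(r+1-q) * τ^(r+2) / ((r+1-q).factorial * (r+2)) := by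
  have hexp (ξ : ℝ) : I * ξ * P = I * P * ξ := by ring
  simp_rw [hexp, integral_pow_mul_exp_sub_sum]
  obtain ⟨k, rfl⟩ := Nat.exists_eq_add_of_le hqr
  rw [show q + k - q + 1 = k + 1 by omega, show q + k + 1 - q = k + 1 by omega]
  convert norm_integral_pow_mul_expTaylorRemainder_le P hτ q (k + 1) using 3 <;> push_cast <;> ring
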